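/- arXiv:1711.00831 — 2 statements merged into one kernel-verified Lean document; each statement's English description precedes it below -/
import Mathlib

section
/- For every feasible flow φ on G and every finite set A' ⊆ A \ {(t,s)} of deleted arcs, there exists an adaptive flow φ' with respect to φ and A' whose value satisfies φ'(t,s) ≥ φ(t,s) − Σ_{a ∈ A'} φ(a); hence the adaptive residual value satisfies ρ(φ, A') ≥ φ(t,s) − Σ_{a ∈ A'} φ(a), i.e., the loss caused by destroying the arcs of A' is at most the total flow they carried. -/
/-!
Take an adaptive flow `φ'` of maximal value; it exists because adaptive flows form a compact
set. Call an arc residual if it is not deleted and `φ' < φ` on it; if the dummy arc is not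
residual the bound is immediate. Otherwise a residual path from `s` to `t`, closed by the dummy
arc, would be a cycle along which `φ'` could be increased, so the set `S` of vertices reachable
from `s` by residual arcs does not contain `t`. The slack `φ - φ'` is a circulation, so its flow
into `S`, which is at least its value `φ(t,s) - φ'(t,s)` on the dummy arc, equals its flow out of
`S`. That outflow is carried by deleted arcs alone, where the slack is `φ`, so it is at most
`∑_{a ∈ A'} φ a`.
-/

open Finset

/-- A directed network with source `s`, sink `t`, nonnegative capacities and a
distinguished dummy arc from `t` to `s` (whose capacity is not constrained). -/
structure Network (V : Type) (A : Type) [Fintype V] [Fintype A]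
    [DecidableEq V] [DecidableEq A] where
  src : A → V
  dst : A → V
  cap : A → ℝ
  s : V
  t : V
  dummy : A
  src_dummy : src dummy = t
  dst_dummy : dst dummy = s
  cap_nonneg : ∀ a, 0 ≤ cap a

variable {V A : Type} [Fintype V] [Fintype A] [DecidableEq V] [DecidableEq A]

/-- Flow conservation at every vertex. -/
def Conserves (N : Network V A) (φ : A → ℝ) : Prop :=
  ∀ w : V, ∑ a ∈ univ.filter (fun a => N.dst a = w), φ a
         = ∑ a ∈ univ.filter (fun a => N.src a = w), φ a

/-- A feasible flow: nonnegative, respecting capacities on non-dummy arcs,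
and conserving flow at every vertex. Its value is `φ N.dummy`. -/
def Feasible (N : Network V A) (φ : A → ℝ) : Prop :=
  Conserves N φ ∧ (∀ a, 0 ≤ φ a) ∧ (∀ a, a ≠ N.dummy → φ a ≤ N.cap a)

/-- A maximum flow: a feasible flow of maximal value. -/
def IsMaxFlow (N : Network V A) (φ : A → ℝ) : Prop :=
  Feasible N φ ∧ ∀ ψ, Feasible N ψ → ψ N.dummy ≤ φ N.dummy

/-- An adaptive flow with respect to a flow `φ` and a set `A'` of deleted arcs. -/
def Adaptive (N : Network V A) (φ : A → ℝ) (A' : Finset A) (φ' : A → ℝ) : Prop :=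
  Conserves N φ' ∧ (∀ a, 0 ≤ φ' a) ∧ (∀ a, φ' a ≤ φ a) ∧ (∀ a ∈ A', φ' a = 0)

/-- The adaptive residual value `ρ(φ, A')`: the maximum value of an adaptive
flow with respect to `φ` and `A'`. -/
noncomputable def rho (N : Network V A) (φ : A → ℝ) (A' : Finset A) : ℝ :=
  sSup {x | ∃ φ', Adaptive N φ A' φ' ∧ x = φ' N.dummy}

open Relation Filter Topology

theorem exists_pos_smul_le {ι : Type*} [Finite ι] {γ ψ : ι → ℝ} (hψ : 0 ≤ ψ)
    (h : ∀ i, γ i ≠ 0 → 0 < ψ i) : ∃ ε : ℝ, 0 < ε ∧ ε • γ ≤ ψ := by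
  have : ∀ᶠ ε in 𝓝[>] (0 : ℝ), ∀ i, ε * γ i ≤ ψ i := by
    refine eventually_all.2 fun i => ?_
    by_cases hi : γ i = 0
    · simpa [hi] using hψ i
    · have : Tendsto (fun ε => ε * γ i) (𝓝[>] 0) (𝓝 0) := by
        simpa using ((continuous_mul_const (γ i)).tendsto 0).mono_left nhdsWithin_le_nhds
      exact (this.eventually (gt_mem_nhds (h i hi))).mono fun _ => le_of_lt
  obtain ⟨ε, hle, hε⟩ := (this.and self_mem_nhdsWithin).exists
  exact ⟨ε, hε, hle⟩

namespace Network

variable (N : Network V A)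

def excess : (A → ℝ) →ₗ[ℝ] V → ℝ where
  toFun γ w := ∑ a with N.dst a = w, γ a - ∑ a with N.src a = w, γ a
  map_add' γ δ := by
    funext w
    simp only [Pi.add_apply, sum_add_distrib]
    ring
  map_smul' c γ := by
    funext w
    simp only [Pi.smul_apply, smul_eq_mul, ← mul_sum, RingHom.id_apply]
    ring

theorem conserves_iff_excess_eq_zero {γ : A → ℝ} : Conserves N γ ↔ N.excess γ = 0 := by
  simp only [Conserves, funext_iff, excess, LinearMap.coe_mk, AddHom.coe_mk, Pi.zero_apply,
    sub_eq_zero]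

theorem excess_single (a : A) :
    N.excess (Pi.single a 1) = Pi.single (N.dst a) 1 - Pi.single (N.src a) 1 := by
  funext w
  simp [excess, Pi.single_apply, eq_comm]

def Adj (P : A → Prop) (u v : V) : Prop :=
  ∃ a, P a ∧ N.src a = u ∧ N.dst a = v

def IsPathFlow (P : A → Prop) (u v : V) (γ : A → ℝ) : Prop :=
  0 ≤ γ ∧ (∀ a, γ a ≠ 0 → P a) ∧ N.excess γ = Pi.single v 1 - Pi.single u 1

variable {N}

theorem IsPathFlow.add_single {P : A → Prop} {u v : V} {γ : A → ℝ}
    (hγ : N.IsPathFlow P u v γ) {a : A} (hPa : P a) (hsrc : N.src a = v) :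
    N.IsPathFlow P u (N.dst a) (γ + Pi.single a 1) := by
  obtain ⟨hγ0, hγP, hγex⟩ := hγ
  refine ⟨add_nonneg hγ0 (Pi.single_nonneg.2 zero_le_one), fun b hb => ?_, ?_⟩
  · by_cases hba : b = a
    · exact hba ▸ hPa
    · exact hγP b (by simpa [hba] using hb)
  · rw [map_add, hγex, excess_single, hsrc]
    abel

theorem exists_isPathFlow {P : A → Prop} {u v : V} (h : ReflTransGen (N.Adj P) u v) :
    ∃ γ, N.IsPathFlow P u v γ := by
  induction h with
  | refl => exact ⟨0, le_rfl, fun a h => absurd rfl h, by simp⟩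
  | tail _ hstep ih =>
    obtain ⟨a, hPa, hsrc, rfl⟩ := hstep
    obtain ⟨γ, hγ⟩ := ih
    exact ⟨_, hγ.add_single hPa hsrc⟩

variable (N)

theorem sum_in_eq_sum_out {ψ : A → ℝ} (hψ : Conserves N ψ) (S : Finset V) :
    ∑ a with N.dst a ∈ S ∧ N.src a ∉ S, ψ a = ∑ a with N.src a ∈ S ∧ N.dst a ∉ S, ψ a := by
  have hS : ∑ a with N.dst a ∈ S, ψ a = ∑ a with N.src a ∈ S, ψ a := by
    rw [← sum_fiberwise_eq_sum_filter univ S N.dst ψ,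
      ← sum_fiberwise_eq_sum_filter univ S N.src ψ]
    exact sum_congr rfl fun w _ => hψ w
  rw [← sum_filter_add_sum_filter_not _ (fun a => N.src a ∈ S),
    ← sum_filter_add_sum_filter_not (univ.filter fun a => N.src a ∈ S) (fun a => N.dst a ∈ S),
    filter_filter, filter_filter, filter_filter, filter_filter] at hS
  have hcomm : ∀ a, (N.dst a ∈ S ∧ N.src a ∈ S) ↔ (N.src a ∈ S ∧ N.dst a ∈ S) :=
    fun a => and_comm
  simp only [hcomm] at hS
  linarith

theorem isCompact_setOf_adaptive (φ : A → ℝ) (A' : Finset A) :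
    IsCompact {φ' | Adaptive N φ A' φ'} := by
  refine (isCompact_univ_pi fun a => isCompact_Icc (a := 0) (b := φ a)).of_isClosed_subset
    ?_ fun φ' h a _ => ⟨h.2.1 a, h.2.2.1 a⟩
  simp only [Adaptive, conserves_iff_excess_eq_zero, Set.ofPred_and, Set.ofPred_forall]
  refine (isClosed_eq (LinearMap.continuous_of_finiteDimensional _) continuous_const).inter
    ((isClosed_iInter fun a => isClosed_le continuous_const (continuous_apply a)).inter
    ((isClosed_iInter fun a => isClosed_le (continuous_apply a) continuous_const).inter
    (isClosed_iInter fun a => isClosed_iInter fun _ => isClosed_eq (continuous_apply a)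
      continuous_const)))

theorem exists_maximal_adaptive {φ : A → ℝ} (hφ : ∀ a, 0 ≤ φ a) (A' : Finset A) :
    ∃ φ', Adaptive N φ A' φ' ∧ ∀ ψ, Adaptive N φ A' ψ → ψ N.dummy ≤ φ' N.dummy := by
  have h0 : Adaptive N φ A' 0 := ⟨fun w => by simp, fun _ => le_rfl, hφ, fun _ _ => rfl⟩
  obtain ⟨φ', hφ', hmax⟩ := (N.isCompact_setOf_adaptive φ A').exists_isMaxOn ⟨0, h0⟩
    (continuous_apply N.dummy).continuousOn
  exact ⟨φ', hφ', fun ψ hψ => hmax hψ⟩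

variable {N} {φ φ' : A → ℝ} {A' : Finset A}

theorem exists_adaptive_gt_of_reflTransGen (hφ' : Adaptive N φ A' φ')
    (hd : N.dummy ∉ A' ∧ φ' N.dummy < φ N.dummy)
    (hreach : ReflTransGen (N.Adj fun a => a ∉ A' ∧ φ' a < φ a) N.s N.t) :
    ∃ ψ, Adaptive N φ A' ψ ∧ φ' N.dummy < ψ N.dummy := by
  obtain ⟨hφ'c, hφ'0, hφ'le, hφ'A'⟩ := hφ'
  obtain ⟨γ, hγ⟩ := N.exists_isPathFlow hreach
  have hγd : 0 ≤ γ N.dummy := hγ.1 N.dummy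
  obtain ⟨hδ0, hδP, hδex⟩ := hγ.add_single hd N.src_dummy
  set δ : A → ℝ := γ + Pi.single N.dummy 1 with hδ
  rw [N.dst_dummy, sub_self] at hδex
  obtain ⟨ε, hε, hεle⟩ := exists_pos_smul_le (ψ := φ - φ')
    (fun a => sub_nonneg.2 (hφ'le a)) (fun a ha => sub_pos.2 (hδP a ha).2)
  refine ⟨φ' + ε • δ, ⟨?_, fun a => ?_, fun a => ?_, fun a ha => ?_⟩, ?_⟩
  · rw [conserves_iff_excess_eq_zero] at hφ'c ⊢
    rw [map_add, map_smul, hφ'c, hδex, smul_zero, add_zero]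
  · exact add_nonneg (hφ'0 a) (mul_nonneg hε.le (hδ0 a))
  · have := hεle a
    simp only [Pi.smul_apply, Pi.sub_apply, Pi.add_apply] at this ⊢
    linarith
  · have : δ a = 0 := by_contra fun h => (hδP a h).1 ha
    simp only [Pi.add_apply, Pi.smul_apply, this, smul_zero, hφ'A' a ha, add_zero]
  · simp only [hδ, Pi.add_apply, Pi.smul_apply, Pi.single_eq_same, smul_eq_mul]
    nlinarith

theorem sub_le_sum_of_not_reflTransGen (hφ : Conserves N φ) (hφ' : Adaptive N φ A' φ')
    (hreach : ¬ReflTransGen (N.Adj fun a => a ∉ A' ∧ φ' a < φ a) N.s N.t) :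
    φ N.dummy - φ' N.dummy ≤ ∑ a ∈ A', φ a := by
  classical
  set S : Finset V := {w | ReflTransGen (N.Adj fun a => a ∉ A' ∧ φ' a < φ a) N.s w}
  have hψ : Conserves N (φ - φ') := by
    have hφ'c := hφ'.1
    rw [conserves_iff_excess_eq_zero] at hφ hφ'c ⊢
    rw [map_sub, hφ, hφ'c, sub_zero]
  have hψ0 : ∀ a, 0 ≤ (φ - φ') a := fun a => sub_nonneg.2 (hφ'.2.2.1 a)
  have hout : ∀ a ∈ ({a | N.src a ∈ S ∧ N.dst a ∉ S} : Finset A), (φ - φ') a ≠ 0 → a ∈ A' := by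
    intro a ha hψa
    by_contra haA'
    simp only [S, mem_filter, mem_univ, true_and] at ha
    exact ha.2 (ha.1.tail ⟨a, ⟨haA', sub_pos.1 ((hψ0 a).lt_of_ne' hψa)⟩, rfl, rfl⟩)
  have hdummy : N.dummy ∈ ({a | N.dst a ∈ S ∧ N.src a ∉ S} : Finset A) := by
    simp only [S, mem_filter, mem_univ, true_and, N.src_dummy, N.dst_dummy]
    exact ⟨.refl, hreach⟩
  calc φ N.dummy - φ' N.dummy
      ≤ ∑ a with N.dst a ∈ S ∧ N.src a ∉ S, (φ - φ') a :=
        single_le_sum (fun a _ => hψ0 a) hdummy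
    _ = ∑ a with N.src a ∈ S ∧ N.dst a ∉ S, (φ - φ') a := N.sum_in_eq_sum_out hψ S
    _ = ∑ a ∈ {a | N.src a ∈ S ∧ N.dst a ∉ S} with a ∈ A', (φ - φ') a :=
        (sum_filter_of_ne hout).symm
    _ ≤ ∑ a ∈ A', (φ - φ') a :=
        sum_le_sum_of_subset_of_nonneg (fun a ha => (mem_filter.1 ha).2) fun a _ _ => hψ0 a
    _ = ∑ a ∈ A', φ a := sum_congr rfl fun a ha => by simp [hφ'.2.2.2 a ha]

theorem sub_sum_le_of_forall_adaptive_le (hφ : Conserves N φ) (hφ' : Adaptive N φ A' φ')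
    (hmax : ∀ ψ, Adaptive N φ A' ψ → ψ N.dummy ≤ φ' N.dummy) :
    φ N.dummy - ∑ a ∈ A', φ a ≤ φ' N.dummy := by
  have hφ0 : ∀ a, 0 ≤ φ a := fun a => (hφ'.2.1 a).trans (hφ'.2.2.1 a)
  have hsum : 0 ≤ ∑ a ∈ A', φ a := sum_nonneg fun a _ => hφ0 a
  by_cases hd : N.dummy ∉ A' ∧ φ' N.dummy < φ N.dummy
  · by_cases hreach : ReflTransGen (N.Adj fun a => a ∉ A' ∧ φ' a < φ a) N.s N.t
    · obtain ⟨ψ, hψ, hgt⟩ := exists_adaptive_gt_of_reflTransGen hφ' hd hreach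
      exact absurd (hmax ψ hψ) hgt.not_ge
    · linarith [sub_le_sum_of_not_reflTransGen hφ hφ' hreach]
  · rcases not_and_or.1 hd with hdA' | hge
    · linarith [single_le_sum (fun a _ => hφ0 a) (not_not.1 hdA'), hφ'.2.1 N.dummy]
    · linarith [not_lt.1 hge]

theorem le_rho (hφ' : Adaptive N φ A' φ') : φ' N.dummy ≤ rho N φ A' :=
  le_csSup ⟨φ N.dummy, by rintro _ ⟨ψ, hψ, rfl⟩; exact hψ.2.2.1 N.dummy⟩ ⟨φ', hφ', rfl⟩

end Network

theorem set_loss_le_total_flow_general (N : Network V A) (φ : A → ℝ)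
    (hφ : Feasible N φ) (A' : Finset A) :
    (∃ φ', Adaptive N φ A' φ' ∧ φ N.dummy - ∑ a ∈ A', φ a ≤ φ' N.dummy) ∧
      φ N.dummy - ∑ a ∈ A', φ a ≤ rho N φ A' := by
  obtain ⟨φ', hφ', hmax⟩ := N.exists_maximal_adaptive hφ.2.1 A'
  have hloss := N.sub_sum_le_of_forall_adaptive_le hφ.1 hφ' hmax
  exact ⟨⟨φ', hφ', hloss⟩, hloss.trans (N.le_rho hφ')⟩

/-- destroying a set `A'` of non-dummy arcs loses at most the
total flow they carried: some adaptive flow with respect to `φ` and `A'` has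
value at least `φ(t,s) - ∑_{a ∈ A'} φ a`, and hence
`ρ(φ, A') ≥ φ(t,s) - ∑_{a ∈ A'} φ a`. -/
theorem set_loss_le_total_flow (N : Network V A) (φ : A → ℝ)
    (hφ : Feasible N φ) (A' : Finset A) (hA' : N.dummy ∉ A') :
    (∃ φ', Adaptive N φ A' φ' ∧ φ N.dummy - ∑ a ∈ A', φ a ≤ φ' N.dummy) ∧
      φ N.dummy - ∑ a ∈ A', φ a ≤ rho N φ A' :=
  set_loss_le_total_flow_general N φ hφ A'
end

section
/- In the network G_b with b ≥ 2, every maximum flow ψ satisfies max over arcs a ∈ A \ {(t,s)} of ( ψ(t,s) − ρ(ψ, {a}) ) ≥ b/2. Combined with the fact that the balanced flow φ* (1 on each s→v arc, b/2 on each v→t arc) achieves worst-case loss exactly b/2, the flow φ* is an optimal solution of the adaptive maximum residual flow problem with 1-arc destruction on G_b. -/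
open Finset

variable {V A : Type} [Fintype V] [Fintype A] [DecidableEq V] [DecidableEq A]

/-- The network `G_b`: vertices `s = 0`, `v = 1`, `t = 2`; `b` parallel arcs
`s → v` of capacity `1`, two parallel arcs `v → t` of capacity `b`, and a
dummy arc `t → s` (its capacity entry is irrelevant). -/
def Gb (b : ℕ) : Network (Fin 3) (Fin b ⊕ Fin 2 ⊕ Unit) where
  src := Sum.elim (fun _ => 0) (Sum.elim (fun _ => 1) (fun _ => 2))
  dst := Sum.elim (fun _ => 1) (Sum.elim (fun _ => 2) (fun _ => 0))
  cap := Sum.elim (fun _ => 1) (Sum.elim (fun _ => (b : ℝ)) (fun _ => 0))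
  s := 0
  t := 2
  dummy := Sum.inr (Sum.inr ())
  src_dummy := rfl
  dst_dummy := rfl
  cap_nonneg := by
    rintro (a | a | a)
    · exact zero_le_one
    · exact Nat.cast_nonneg b
    · exact le_refl 0

/-- The balanced flow `φ*` on `G_b`: one unit on each `s → v` arc, `b/2` units
on each of the two `v → t` arcs, and `b` units on the dummy arc. -/
noncomputable def phiStar (b : ℕ) : (Fin b ⊕ Fin 2 ⊕ Unit) → ℝ :=
  Sum.elim (fun _ => 1) (Sum.elim (fun _ => (b : ℝ) / 2) (fun _ => (b : ℝ)))

/-! Deleting one of the two arcs `v → t` leaves at most the flow of the other one, and a maximum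
flow sends `b` units through this pair of arcs, so one of them carries at most `b/2` and deleting
the other costs at least `b/2`. For `φ*` this is also the worst case: deleting an arc `s → v`
costs only one unit once the remaining `b - 1` units are rerouted over both arcs `v → t`. -/

section Residual

variable {N : Network V A} {φ : A → ℝ}

theorem le_rho {A' : Finset A} {φ' : A → ℝ} (h : Adaptive N φ A' φ') :
    φ' N.dummy ≤ rho N φ A' :=
  le_csSup ⟨φ N.dummy, by rintro x ⟨ψ, hψ, rfl⟩; exact hψ.2.2.1 N.dummy⟩ ⟨φ', h, rfl⟩

theorem rho_le {A' : Finset A} {c : ℝ} (hc : 0 ≤ c)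
    (h : ∀ φ', Adaptive N φ A' φ' → φ' N.dummy ≤ c) : rho N φ A' ≤ c :=
  Real.sSup_le (by rintro x ⟨φ', hφ', rfl⟩; exact h φ' hφ') hc

theorem rho_nonneg (hφ : ∀ a, 0 ≤ φ a) (A' : Finset A) : 0 ≤ rho N φ A' :=
  le_rho (φ' := fun _ => 0) ⟨fun _ => by simp, fun _ => le_rfl, hφ, fun _ _ => rfl⟩

noncomputable def worstLoss (N : Network V A) (φ : A → ℝ) : ℝ :=
  sSup {y : ℝ | ∃ a : A, a ≠ N.dummy ∧ y = φ N.dummy - rho N φ {a}}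

theorem le_worstLoss (hφ : ∀ a, 0 ≤ φ a) {a : A} (ha : a ≠ N.dummy) :
    φ N.dummy - rho N φ {a} ≤ worstLoss N φ := by
  refine le_csSup ⟨φ N.dummy, ?_⟩ ⟨a, ha, rfl⟩
  rintro y ⟨a', -, rfl⟩
  linarith [rho_nonneg (N := N) hφ {a'}]

theorem worstLoss_le {c : ℝ} (hc : 0 ≤ c)
    (h : ∀ a, a ≠ N.dummy → φ N.dummy - rho N φ {a} ≤ c) : worstLoss N φ ≤ c :=
  Real.sSup_le (by rintro y ⟨a, ha, rfl⟩; exact h a ha) hc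

end Residual

namespace Gb

variable {b : ℕ}

theorem conserves_iff (φ : Fin b ⊕ Fin 2 ⊕ Unit → ℝ) :
    Conserves (Gb b) φ ↔
      φ (.inr (.inr ())) = ∑ i, φ (.inl i) ∧
      ∑ i, φ (.inl i) = φ (.inr (.inl 0)) + φ (.inr (.inl 1)) := by
  simp only [Conserves, Fin.forall_fin_succ, Finset.sum_filter, Fintype.sum_sum_type,
    Fin.sum_univ_two]
  simpa [Gb] using fun h₀ h₁ => (h₀.trans h₁).symm

theorem value_le_of_feasible {φ : Fin b ⊕ Fin 2 ⊕ Unit → ℝ} (h : Feasible (Gb b) φ) :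
    φ (Gb b).dummy ≤ b := by
  obtain ⟨hcons, -, hcap⟩ := h
  calc φ (Gb b).dummy = ∑ i, φ (.inl i) := ((conserves_iff φ).mp hcons).1
    _ ≤ ∑ _i : Fin b, (1 : ℝ) := Finset.sum_le_sum fun i _ => hcap (.inl i) Sum.inl_ne_inr
    _ = b := by simp

theorem phiStar_feasible : Feasible (Gb b) (phiStar b) := by
  refine ⟨(conserves_iff _).mpr ⟨by simp [phiStar], by simp [phiStar]⟩, ?_, ?_⟩
  · rintro (_ | _ | _) <;> simp only [phiStar, Sum.elim_inl, Sum.elim_inr] <;> positivity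
  · rintro (_ | _ | _) h <;> simp_all [phiStar, Gb]

theorem phiStar_isMaxFlow : IsMaxFlow (Gb b) (phiStar b) :=
  ⟨phiStar_feasible, fun _ hψ => value_le_of_feasible hψ⟩

theorem value_eq_of_isMaxFlow {ψ : Fin b ⊕ Fin 2 ⊕ Unit → ℝ} (hψ : IsMaxFlow (Gb b) ψ) :
    ψ (Gb b).dummy = b :=
  le_antisymm (value_le_of_feasible hψ.1) (hψ.2 _ phiStar_feasible)

theorem value_eq_vt_add {φ : Fin b ⊕ Fin 2 ⊕ Unit → ℝ} (h : Conserves (Gb b) φ) :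
    φ (Gb b).dummy = φ (.inr (.inl 0)) + φ (.inr (.inl 1)) :=
  ((conserves_iff φ).mp h).1.trans ((conserves_iff φ).mp h).2

theorem rho_delete_vt_le {ψ : Fin b ⊕ Fin 2 ⊕ Unit → ℝ} (hψ : ∀ a, 0 ≤ ψ a) (j : Fin 2) :
    rho (Gb b) ψ {.inr (.inl j)} ≤
      ψ (.inr (.inl 0)) + ψ (.inr (.inl 1)) - ψ (.inr (.inl j)) := by
  refine rho_le (by fin_cases j <;> simp [hψ]) fun φ' ⟨hcons, _, hle, hzero⟩ => ?_
  have hj : φ' (.inr (.inl j)) = 0 := hzero _ (Finset.mem_singleton_self _)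
  have hvalue := value_eq_vt_add hcons
  fin_cases j <;> simp only [Fin.zero_eta, Fin.mk_one] at hj ⊢ <;>
    linarith [hle (.inr (.inl 0)), hle (.inr (.inl 1))]

theorem vt_le_worstLoss {ψ : Fin b ⊕ Fin 2 ⊕ Unit → ℝ} (hψ : Feasible (Gb b) ψ) (j : Fin 2) :
    ψ (.inr (.inl j)) ≤ worstLoss (Gb b) ψ :=
  calc ψ (.inr (.inl j))
      ≤ ψ (Gb b).dummy - rho (Gb b) ψ {.inr (.inl j)} := by
        linarith [value_eq_vt_add hψ.1, rho_delete_vt_le hψ.2.1 j]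
    _ ≤ worstLoss (Gb b) ψ := le_worstLoss hψ.2.1 (by simp [Gb])

theorem half_le_worstLoss_of_isMaxFlow {ψ : Fin b ⊕ Fin 2 ⊕ Unit → ℝ}
    (hψ : IsMaxFlow (Gb b) ψ) : (b : ℝ) / 2 ≤ worstLoss (Gb b) ψ := by
  have hsum : ψ (.inr (.inl 0)) + ψ (.inr (.inl 1)) = b :=
    (value_eq_vt_add hψ.1.1).symm.trans (value_eq_of_isMaxFlow hψ)
  calc (b : ℝ) / 2 ≤ max (ψ (.inr (.inl 0))) (ψ (.inr (.inl 1))) := by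
        linarith [le_max_left (ψ (.inr (.inl 0))) (ψ (.inr (.inl 1))),
          le_max_right (ψ (.inr (.inl 0))) (ψ (.inr (.inl 1)))]
    _ ≤ worstLoss (Gb b) ψ := max_le (vt_le_worstLoss hψ.1 0) (vt_le_worstLoss hψ.1 1)

theorem sum_le_rho_phiStar {x : Fin b → ℝ} {y : Fin 2 → ℝ} (hx₀ : ∀ i, 0 ≤ x i)
    (hx₁ : ∀ i, x i ≤ 1) (hy₀ : ∀ j, 0 ≤ y j) (hy₁ : ∀ j, y j ≤ b / 2)
    (hxy : ∑ i, x i = y 0 + y 1) {a : Fin b ⊕ Fin 2 ⊕ Unit}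
    (ha : Sum.elim x (Sum.elim y fun _ => ∑ i, x i) a = 0) :
    ∑ i, x i ≤ rho (Gb b) (phiStar b) {a} := by
  refine le_rho (φ' := Sum.elim x (Sum.elim y fun _ => ∑ i, x i))
    ⟨(conserves_iff _).mpr ⟨rfl, hxy⟩, ?_, ?_, fun a' ha' => Finset.mem_singleton.mp ha' ▸ ha⟩
  · rintro (i | j | _)
    exacts [hx₀ i, hy₀ j, (Finset.sum_nonneg fun i _ => hx₀ i : 0 ≤ ∑ i, x i)]
  · rintro (i | j | _)
    exacts [hx₁ i, hy₁ j, by simp only [phiStar, Sum.elim_inr]; linarith [hy₁ 0, hy₁ 1]]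

theorem sub_one_le_rho_phiStar_delete_sv (i : Fin b) :
    (b : ℝ) - 1 ≤ rho (Gb b) (phiStar b) {.inl i} := by
  have hb : (1 : ℝ) ≤ b := by exact_mod_cast i.pos
  simpa [Finset.sum_sub_distrib] using
    sum_le_rho_phiStar (x := fun k => 1 - if k = i then 1 else 0) (y := fun _ => ((b : ℝ) - 1) / 2)
      (fun k => by split_ifs <;> norm_num) (fun k => by split_ifs <;> norm_num)
      (fun _ => by linarith) (fun _ => by linarith) (by simp [Finset.sum_sub_distrib]) (by simp)

theorem half_le_rho_phiStar_delete_vt (j : Fin 2) :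
    (b : ℝ) / 2 ≤ rho (Gb b) (phiStar b) {.inr (.inl j)} := by
  have hb : (0 : ℝ) ≤ b := b.cast_nonneg
  simpa [div_eq_mul_inv, mul_comm] using
    sum_le_rho_phiStar (x := fun _ => 1 / 2) (y := fun j' => if j' = j then 0 else (b : ℝ) / 2)
      (fun _ => by norm_num) (fun _ => by norm_num)
      (fun _ => by split_ifs <;> linarith) (fun _ => by split_ifs <;> linarith)
      (by fin_cases j <;> simp <;> ring) (a := .inr (.inl j)) (by simp)

theorem worstLoss_phiStar (hb : 2 ≤ b) : worstLoss (Gb b) (phiStar b) = b / 2 := by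
  refine le_antisymm (worstLoss_le (by positivity) ?_)
    (half_le_worstLoss_of_isMaxFlow phiStar_isMaxFlow)
  have hb' : (2 : ℝ) ≤ b := by exact_mod_cast hb
  have hvalue : phiStar b (Gb b).dummy = b := rfl
  rintro (i | j | _) ha
  · linarith [sub_one_le_rho_phiStar_delete_sv i]
  · linarith [half_le_rho_phiStar_delete_vt (b := b) j]
  · exact absurd rfl ha

end Gb

/-- in `G_b` (`b ≥ 2`), every maximum flow has worst-case
single-arc-destruction loss at least `b/2`; consequently the balanced flow
`φ*`, whose worst-case loss is exactly `b/2`, is an optimal solution of the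
adaptive maximum residual flow problem with 1-arc destruction on `G_b`. -/
theorem Gb_phiStar_optimal (b : ℕ) (hb : 2 ≤ b) :
    (∀ ψ : Fin b ⊕ Fin 2 ⊕ Unit → ℝ, IsMaxFlow (Gb b) ψ →
      (b : ℝ) / 2 ≤ sSup {y : ℝ | ∃ a : Fin b ⊕ Fin 2 ⊕ Unit,
        a ≠ (Gb b).dummy ∧ y = ψ (Gb b).dummy - rho (Gb b) ψ {a}}) ∧
    IsMaxFlow (Gb b) (phiStar b) ∧
    sSup {y : ℝ | ∃ a : Fin b ⊕ Fin 2 ⊕ Unit, a ≠ (Gb b).dummy ∧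
        y = phiStar b (Gb b).dummy - rho (Gb b) (phiStar b) {a}}
      = (b : ℝ) / 2 ∧
    (∀ ψ : Fin b ⊕ Fin 2 ⊕ Unit → ℝ, IsMaxFlow (Gb b) ψ →
      sSup {y : ℝ | ∃ a : Fin b ⊕ Fin 2 ⊕ Unit, a ≠ (Gb b).dummy ∧
          y = phiStar b (Gb b).dummy - rho (Gb b) (phiStar b) {a}}
      ≤ sSup {y : ℝ | ∃ a : Fin b ⊕ Fin 2 ⊕ Unit, a ≠ (Gb b).dummy ∧
          y = ψ (Gb b).dummy - rho (Gb b) ψ {a}}) :=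
  ⟨fun _ hψ => Gb.half_le_worstLoss_of_isMaxFlow hψ, Gb.phiStar_isMaxFlow,
    Gb.worstLoss_phiStar hb,
    fun _ hψ => (Gb.worstLoss_phiStar hb).trans_le (Gb.half_le_worstLoss_of_isMaxFlow hψ)⟩
end
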